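/- arXiv:1509.07462 — 2 statements merged into one kernel-verified Lean document; each statement's English description precedes it below -/
import Mathlib

section
/- Let G be a finite abelian group with |G| ≥ 3. Then the set of distances Δ(G) of the monoid B(G) is an interval of positive integers with min Δ(G) = 1 and max Δ(G) ≤ D(G) − 2. -/
open scoped Classical ENNReal

/-- An atom of a reduced additive monoid: a nonzero element which is not the sum of
two nonzero elements. -/
def IsAddAtom {N : Type*} [AddMonoid N] (u : N) : Prop :=
  u ≠ 0 ∧ ∀ v w : N, u = v + w → v = 0 ∨ w = 0

/-- The set of lengths of `a` in a reduced additive monoid. -/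
def addLengths {N : Type*} [AddMonoid N] (a : N) : Set ℕ :=
  {k | ∃ l : List N, l.length = k ∧ (∀ x ∈ l, IsAddAtom x) ∧ l.sum = a}

/-- An atom of the (reduced) submonoid `S`: a nonzero element of `S` which is not the
sum of two nonzero elements of `S`. -/
def IsAtomIn {N : Type*} [AddCommMonoid N] (S : Set N) (u : N) : Prop :=
  u ∈ S ∧ u ≠ 0 ∧ ∀ v ∈ S, ∀ w ∈ S, u = v + w → v = 0 ∨ w = 0

/-- The set of lengths of `a` relative to the submonoid `S`. -/
def lengthsIn {N : Type*} [AddCommMonoid N] (S : Set N) (a : N) : Set ℕ :=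
  {k | ∃ l : List N, l.length = k ∧ (∀ x ∈ l, IsAtomIn S x) ∧ l.sum = a}

/-- The set of distances of a set `L ⊆ ℕ`. -/
def distances (L : Set ℕ) : Set ℕ :=
  {d | 0 < d ∧ ∃ k ∈ L, k + d ∈ L ∧ ∀ m ∈ L, k ≤ m → m ≤ k + d → m = k ∨ m = k + d}

/-- The set of distances of the submonoid `S`. -/
def DeltaIn {N : Type*} [AddCommMonoid N] (S : Set N) : Set ℕ :=
  ⋃ a ∈ S, distances (lengthsIn S a)

/-- The monoid of zero-sum sequences over `G`, realized as the set of multisets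
over `G` with sum zero. -/
def ZS (G : Type*) [AddCommGroup G] : Set (Multiset G) := {s | s.sum = 0}

/-- The Davenport constant: the maximal length of an atom of `B(G)`. -/
noncomputable def davenport (G : Type*) [AddCommGroup G] : ℕ :=
  sSup {n : ℕ | ∃ s : Multiset G, IsAtomIn (ZS G) s ∧ Multiset.card s = n}

/-- The union `U_k` of sets of lengths relative to `S`. -/
def UIn {N : Type*} [AddCommMonoid N] (S : Set N) (k : ℕ) : Set ℕ :=
  {ℓ | ∃ l1 l2 : List N, l1.length = k ∧ l2.length = ℓ ∧
      (∀ x ∈ l1, IsAtomIn S x) ∧ (∀ x ∈ l2, IsAtomIn S x) ∧ l1.sum = l2.sum}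

/-- `ρ_k = sup U_k`, valued in `ℝ≥0∞`. -/
noncomputable def rhoKIn {N : Type*} [AddCommMonoid N] (S : Set N) (k : ℕ) : ℝ≥0∞ :=
  ⨆ ℓ ∈ UIn S k, (ℓ : ℝ≥0∞)

/-- The elasticity `ρ(L) = sup L / min L` of a set of lengths, with `ρ({0}) = 1`. -/
noncomputable def setElasticity (L : Set ℕ) : ℝ≥0∞ :=
  if L = {0} then 1 else (⨆ n ∈ L, (n : ℝ≥0∞)) / ((sInf L : ℕ) : ℝ≥0∞)

/-- The elasticity of the submonoid `S`. -/
noncomputable def elasticityIn {N : Type*} [AddCommMonoid N] (S : Set N) : ℝ≥0∞ :=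
  ⨆ a ∈ S, setElasticity (lengthsIn S a)

/-!
`1 ∈ Δ(G)`: choose `a, b ≠ 0` with `a + b ≠ 0` (possible as `|G| ≥ 3`); for the atom
`U = a b (-(a + b))` the sequence `U (-U) = (a (-a)) (b (-b)) ((a + b) (-(a + b)))` has lengths
2 and 3.

Interval: let `k < l` be consecutive lengths of `A` with `l ≥ k + 2`. Some atom of a factorization
of length `k` contains two terms `x, y`; replace them in `A` by `x + y`. Contracting an atom gives
an atom, so `k` stays a length, and each length `t` of `A` yields a length `≥ t - 1`. Conversely
expanding `x + y` back splits its atom into at most two atoms, so every length of the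
contracted sequence is a length of `A` or one less than a length. Hence the contracted sequence
has consecutive lengths `k < l'` with `l' ≥ l - 1`, and repeating reaches every distance
`1 ≤ d ≤ l - k`.

Bound: fix an atom `u` of a factorization of length `k`. If `u v ∣ A` for an atom `v` of a
factorization of length `l`, write `A = u v C` and take a length `c` of `C`. As `c + 2` is a
length of `A`, it is `≤ k` or `≥ l`; accordingly `u C` or `v C` has consecutive lengths at least
`l - k` apart, the smaller one `< k`, and we induct on `k`. Otherwise each atom of the long
factorization is needed to cover `u`, so `l ≤ |u| ≤ D(G)`, while `k ≥ 2`.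
-/

def IsGap (L : Set ℕ) (k l : ℕ) : Prop :=
  k ∈ L ∧ l ∈ L ∧ k < l ∧ ∀ m ∈ L, m ≤ k ∨ l ≤ m

section Gaps

variable {L : Set ℕ}

theorem mem_distances_iff_exists_isGap {d : ℕ} : d ∈ distances L ↔ ∃ k, IsGap L k (k + d) := by
  constructor
  · rintro ⟨hd, k, hk, hkd, hmid⟩
    refine ⟨k, hk, hkd, by omega, fun m hm => ?_⟩
    by_contra! h
    rcases hmid m hm h.1.le h.2.le with rfl | rfl <;> omega
  · rintro ⟨k, hk, hkd, hlt, hmid⟩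
    refine ⟨by omega, k, hk, hkd, fun m hm h₁ h₂ => ?_⟩
    rcases hmid m hm with h | h <;> omega

theorem exists_isGap_le {k m : ℕ} (hk : k ∈ L) (hm : m ∈ L) (hkm : k < m) :
    ∃ l, IsGap L k l ∧ l ≤ m := by
  have hex : ∃ n, n ∈ L ∧ k < n := ⟨m, hm, hkm⟩
  obtain ⟨hmem, hlt⟩ := Nat.find_spec hex
  refine ⟨Nat.find hex, ⟨hk, hmem, hlt, fun n hn => ?_⟩, Nat.find_min' hex ⟨hm, hkm⟩⟩
  by_contra! h
  exact Nat.find_min hex h.2 ⟨hn, h.1⟩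

theorem exists_isGap_ge {m l : ℕ} (hm : m ∈ L) (hl : l ∈ L) (hml : m < l) :
    ∃ k, IsGap L k l ∧ m ≤ k := by
  have hle : m ≤ l - 1 := by omega
  set k := Nat.findGreatest (· ∈ L) (l - 1)
  have hkl : k ≤ l - 1 := Nat.findGreatest_le _
  refine ⟨k, ⟨Nat.findGreatest_spec hle hm, hl, by omega, fun n hn => ?_⟩,
    Nat.le_findGreatest hle hm⟩
  by_contra! h
  exact absurd (Nat.le_findGreatest (P := (· ∈ L)) (by omega : n ≤ l - 1) hn) (by omega)

end Gaps

section Lengths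

variable {N : Type*} [AddCommMonoid N] {S : Set N}

theorem add_mem_lengthsIn {a b : N} {m n : ℕ} (hm : m ∈ lengthsIn S a) (hn : n ∈ lengthsIn S b) :
    m + n ∈ lengthsIn S (a + b) := by
  obtain ⟨l₁, rfl, hl₁, rfl⟩ := hm
  obtain ⟨l₂, rfl, hl₂, rfl⟩ := hn
  exact ⟨l₁ ++ l₂, List.length_append, by simpa [or_imp, forall_and] using ⟨hl₁, hl₂⟩,
    List.sum_append⟩

theorem IsAtomIn.one_mem_lengthsIn {u : N} (hu : IsAtomIn S u) : 1 ∈ lengthsIn S u :=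
  ⟨[u], rfl, by simpa using hu, by simp⟩

theorem exists_add_of_mem_factorization {l : List N} (hl : ∀ x ∈ l, IsAtomIn S x) {u : N}
    (hu : u ∈ l) : ∃ b, l.sum = u + b ∧ ∃ s ∈ lengthsIn S b, l.length = s + 1 := by
  have hperm := List.perm_cons_erase hu
  refine ⟨(l.erase u).sum, by rw [hperm.sum_eq, List.sum_cons], _, ⟨l.erase u, rfl,
    fun x hx => hl x (List.mem_of_mem_erase hx), rfl⟩, by rw [hperm.length_eq, List.length_cons]⟩

theorem isAtomIn_of_one_mem_lengthsIn {a : N} (h : 1 ∈ lengthsIn S a) : IsAtomIn S a := by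
  obtain ⟨l, hl, hat, rfl⟩ := h
  obtain ⟨u, rfl⟩ := List.length_eq_one_iff.mp hl
  simpa using hat

end Lengths

theorem Multiset.exists_card_le_of_le_sum {α : Type*} {u : Multiset α}
    {V : Multiset (Multiset α)} (h : u ≤ V.sum) : ∃ T ≤ V, card T ≤ card u ∧ u ≤ T.sum := by
  induction u using Multiset.induction_on with
  | empty => exact ⟨0, zero_le _, by simp, by simp⟩
  | cons g u ih =>
    obtain ⟨T, hTV, hcard, huT⟩ := ih ((le_cons_self u g).trans h)
    by_cases hg : g ::ₘ u ≤ T.sum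
    · exact ⟨T, hTV, by rw [card_cons]; omega, hg⟩
    have hV : V.sum = T.sum + (V - T).sum := by rw [← sum_add, add_tsub_cancel_of_le hTV]
    obtain ⟨v, hv, hgv⟩ : ∃ v ∈ V - T, g ∈ v := by
      rw [← mem_join, join, ← count_pos]
      by_contra! h0
      refine hg (le_iff_count.mpr fun a => ?_)
      have ha := count_le_of_le a h
      rw [hV, count_add] at ha
      by_cases hag : a = g
      · subst hag; omega
      · rw [count_cons_of_ne hag]; exact count_le_of_le a huT
    obtain ⟨v', rfl⟩ := exists_cons_of_mem hgv
    refine ⟨(g ::ₘ v') ::ₘ T, ?_, by simp [hcard], ?_⟩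
    · rw [← singleton_add, add_comm]
      exact (add_le_add_right (singleton_le.mpr hv) T).trans_eq (add_tsub_cancel_of_le hTV)
    · rw [sum_cons, cons_add]
      exact cons_le_cons g (huT.trans le_add_self)

theorem Multiset.card_le_of_forall_not_add_le {α : Type*} {u : Multiset α}
    {V : Multiset (Multiset α)} (hu : u ≤ V.sum) (h : ∀ v ∈ V, ¬u + v ≤ V.sum) :
    card V ≤ card u := by
  obtain ⟨T, hTV, hcard, huT⟩ := exists_card_le_of_le_sum hu
  obtain rfl | hlt := hTV.eq_or_lt
  · exact hcard
  obtain ⟨v, hv⟩ := exists_mem_of_ne_zero (tsub_pos_of_lt hlt).ne'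
  refine absurd ?_ (h v (mem_of_le tsub_le_self hv))
  calc u + v ≤ T.sum + (V - T).sum := add_le_add huT (single_le_sum (fun _ _ => zero_le _) v hv)
    _ = V.sum := by rw [← sum_add, add_tsub_cancel_of_le hTV]

section ZeroSum

open Multiset

variable {G : Type*} [AddCommGroup G]

@[simp]
theorem mem_ZS {s : Multiset G} : s ∈ ZS G ↔ s.sum = 0 := Iff.rfl

namespace IsAtomIn

theorem eq_of_le {u T : Multiset G} (hu : IsAtomIn (ZS G) u) (hT : T ≤ u) (hT0 : T.sum = 0)
    (hne : T ≠ 0) : T = u := by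
  obtain ⟨R, rfl⟩ := Multiset.le_iff_exists_add.mp hT
  have hR : R.sum = 0 := by simpa [hT0] using hu.1
  rcases hu.2.2 T hT0 R hR rfl with h | rfl
  · exact absurd h hne
  · rw [add_zero]

theorem eq_zero_of_le_of_cons {g : G} {S T : Multiset G} (hu : IsAtomIn (ZS G) (g ::ₘ S))
    (hT : T ≤ S) (hT0 : T.sum = 0) : T = 0 := by
  by_contra hne
  have h := congrArg card (hu.eq_of_le (hT.trans (le_cons_self S g)) hT0 hne)
  have := card_le_card hT
  rw [card_cons] at h
  omega

theorem contract {x y : G} {u : Multiset G} (hu : IsAtomIn (ZS G) (x ::ₘ y ::ₘ u)) :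
    IsAtomIn (ZS G) ((x + y) ::ₘ u) := by
  have key : ∀ v w : Multiset G, v.sum = 0 → w.sum = 0 → x + y ∈ v →
      (x + y) ::ₘ u = v + w → w = 0 := by
    intro v w hv hw hxy h
    obtain ⟨v, rfl⟩ := exists_cons_of_mem hxy
    rw [cons_add, cons_inj_right] at h
    refine (hu.2.2 (x ::ₘ y ::ₘ v) ?_ w hw (by rw [h, cons_add, cons_add])).resolve_left
      (cons_ne_zero)
    simpa [add_assoc] using hv
  refine ⟨by simpa [add_assoc] using hu.1, cons_ne_zero, fun v hv w hw h => ?_⟩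
  rcases mem_add.mp (h ▸ mem_cons_self (x + y) u) with hmem | hmem
  · exact Or.inr (key v w hv hw hmem h)
  · exact Or.inl (key w v hw hv hmem (h.trans (add_comm v w)))

end IsAtomIn

theorem isAtomIn_of_card_le_three {u : Multiset G} (h0 : u.sum = 0) (hne : u ≠ 0)
    (hcard : card u ≤ 3) (hnz : (0 : G) ∉ u) : IsAtomIn (ZS G) u := by
  have two_le : ∀ v ≤ u, v.sum = 0 → v ≠ 0 → 2 ≤ card v := by
    intro v hv hv0 hvne
    by_contra! h
    have h1 : card v = 1 := by have := card_pos.mpr hvne; omega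
    obtain ⟨a, rfl⟩ := card_eq_one.mp h1
    rw [sum_singleton] at hv0
    exact hnz (hv0 ▸ mem_of_le hv (mem_singleton_self a))
  refine ⟨h0, hne, fun v hv w hw h => ?_⟩
  by_contra! hvw
  have hv2 := two_le v (h ▸ le_add_right le_rfl) hv hvw.1
  have hw2 := two_le w (h ▸ le_add_left le_rfl) hw hvw.2
  have := congrArg card h
  rw [card_add] at this
  omega

theorem IsAtomIn.count_le_addOrderOf [Fintype G] {u : Multiset G} (hu : IsAtomIn (ZS G) u)
    (g : G) : count g u ≤ addOrderOf g := by
  by_contra! h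
  have hrep : replicate (addOrderOf g) g = u :=
    hu.eq_of_le (le_count_iff_replicate_le.mp h.le) (by simp [addOrderOf_nsmul_eq_zero])
      (card_pos.mp (by rw [card_replicate]; exact addOrderOf_pos g))
  rw [← hrep, count_replicate_self] at h
  exact lt_irrefl _ h

theorem IsAtomIn.card_le_davenport [Fintype G] {u : Multiset G} (hu : IsAtomIn (ZS G) u) :
    card u ≤ davenport G := by
  refine le_csSup ⟨Fintype.card G * Fintype.card G, ?_⟩ ⟨u, hu, rfl⟩
  rintro _ ⟨v, hv, rfl⟩
  rw [← sum_count_eq_card (s := Finset.univ) (fun a _ => Finset.mem_univ a)]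
  calc ∑ g, count g v ≤ ∑ _g : G, Fintype.card G :=
        Finset.sum_le_sum fun g _ => (hv.count_le_addOrderOf g).trans addOrderOf_le_card_univ
    _ = Fintype.card G * Fintype.card G := by simp

theorem sum_eq_zero_of_mem_lengthsIn {A : Multiset G} {t : ℕ} (ht : t ∈ lengthsIn (ZS G) A) :
    A.sum = 0 := by
  obtain ⟨l, -, hl, rfl⟩ := ht
  refine (map_list_sum sumAddMonoidHom l).trans ?_
  exact List.sum_eq_zero fun s hs => by
    obtain ⟨u, hu, rfl⟩ := List.mem_map.mp hs
    exact (hl u hu).1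

theorem eq_zero_of_mem_lengthsIn_zero {t : ℕ} (ht : t ∈ lengthsIn (ZS G) 0) : t = 0 := by
  obtain ⟨l, rfl, hl, hsum⟩ := ht
  rw [List.sum_eq_zero_iff] at hsum
  exact List.length_eq_zero_iff.mpr
    (List.eq_nil_iff_forall_not_mem.mpr fun u hu => (hl u hu).2.1 (hsum u hu))

theorem pos_of_mem_lengthsIn {A : Multiset G} (hA : A ≠ 0) {t : ℕ}
    (ht : t ∈ lengthsIn (ZS G) A) : 0 < t := by
  obtain ⟨l, rfl, -, rfl⟩ := ht
  exact List.length_pos_iff.mpr (by rintro rfl; exact hA rfl)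

theorem le_card_of_mem_lengthsIn {A : Multiset G} {t : ℕ} (ht : t ∈ lengthsIn (ZS G) A) :
    t ≤ card A := by
  obtain ⟨l, rfl, hl, rfl⟩ := ht
  have hpos : ∀ n ∈ l.map cardHom, 1 ≤ n := by
    intro n hn
    obtain ⟨u, hu, rfl⟩ := List.mem_map.mp hn
    exact card_pos.mpr (hl u hu).2.1
  simpa [← map_list_sum] using List.length_le_sum_of_one_le _ hpos

theorem lengthsIn_nonempty {A : Multiset G} (hA : A.sum = 0) :
    (lengthsIn (ZS G) A).Nonempty := by
  induction hn : card A using Nat.strong_induction_on generalizing A with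
  | _ n ih =>
  by_cases h0 : A = 0
  · exact ⟨0, [], rfl, by simp, by simp [h0]⟩
  by_cases hat : IsAtomIn (ZS G) A
  · exact ⟨1, hat.one_mem_lengthsIn⟩
  obtain ⟨v, hv, w, hw, rfl, hv0, hw0⟩ : ∃ v ∈ ZS G, ∃ w ∈ ZS G, A = v + w ∧ v ≠ 0 ∧ w ≠ 0 := by
    simpa [IsAtomIn, hA, h0] using hat
  have hvc := card_pos.mpr hv0
  have hwc := card_pos.mpr hw0
  rw [card_add] at hn
  obtain ⟨m, hm⟩ := ih _ (by omega) hv rfl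
  obtain ⟨m', hm'⟩ := ih _ (by omega) hw rfl
  exact ⟨m + m', add_mem_lengthsIn hm hm'⟩

theorem exists_isAtomIn_mem_of_mem {A : Multiset G} {t : ℕ} {g : G}
    (ht : t ∈ lengthsIn (ZS G) A) (hg : g ∈ A) :
    ∃ W R, IsAtomIn (ZS G) W ∧ g ∈ W ∧ A = W + R ∧ ∃ s ∈ lengthsIn (ZS G) R, t = s + 1 := by
  obtain ⟨l, rfl, hl, rfl⟩ := ht
  obtain ⟨W, hW, hgW⟩ : ∃ W ∈ l, g ∈ W := by
    rw [← sum_coe, ← join, mem_join] at hg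
    simpa using hg
  obtain ⟨R, hR, hs⟩ := exists_add_of_mem_factorization hl hW
  exact ⟨W, R, hl W hW, hgW, hR, hs⟩

theorem IsAtomIn.eq_one_of_mem_lengthsIn {u : Multiset G} (hu : IsAtomIn (ZS G) u) {t : ℕ}
    (ht : t ∈ lengthsIn (ZS G) u) : t = 1 := by
  obtain ⟨g, hg⟩ := exists_mem_of_ne_zero hu.2.1
  obtain ⟨W, R, hW, -, hWR, s, hs, rfl⟩ := exists_isAtomIn_mem_of_mem ht hg
  rcases hu.2.2 W hW.1 R (sum_eq_zero_of_mem_lengthsIn hs) hWR with h | rfl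
  · exact absurd h hW.2.1
  · rw [eq_zero_of_mem_lengthsIn_zero hs]

theorem exists_isAtomIn_cons_cons_of_lt {A : Multiset G} {k l : ℕ}
    (hk : k ∈ lengthsIn (ZS G) A) (hl : l ∈ lengthsIn (ZS G) A) (hkl : k < l) :
    ∃ x y u R, IsAtomIn (ZS G) (x ::ₘ y ::ₘ u) ∧ A = x ::ₘ y ::ₘ u + R ∧
      ∃ s ∈ lengthsIn (ZS G) R, k = s + 1 := by
  obtain ⟨lu, rfl, hlu, rfl⟩ := hk
  obtain ⟨u, hu, hcard⟩ : ∃ u ∈ lu, 2 ≤ card u := by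
    by_contra! h
    have hle : card lu.sum ≤ lu.length := by
      simpa [← map_list_sum] using List.sum_le_card_nsmul (lu.map cardHom) 1
        (by simpa [Nat.lt_succ_iff] using h)
    have := le_card_of_mem_lengthsIn hl
    omega
  obtain ⟨x, hx⟩ := exists_mem_of_ne_zero (card_pos.mp (by omega : 0 < card u))
  obtain ⟨u, rfl⟩ := exists_cons_of_mem hx
  obtain ⟨y, hy⟩ := exists_mem_of_ne_zero (card_pos.mp (by rw [card_cons] at hcard; omega : 0 < card u))
  obtain ⟨u, rfl⟩ := exists_cons_of_mem hy
  obtain ⟨R, hR, hs⟩ := exists_add_of_mem_factorization hlu hu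
  exact ⟨x, y, u, R, hlu _ hu, hR, hs⟩

theorem IsAtomIn.le_two_of_mem_lengthsIn_expand {x y : G} {S : Multiset G}
    (hW : IsAtomIn (ZS G) ((x + y) ::ₘ S)) {t : ℕ}
    (ht : t ∈ lengthsIn (ZS G) (x ::ₘ y ::ₘ S)) : t ≤ 2 := by
  obtain ⟨P, R, -, hxP, hPR, s, hs, rfl⟩ := exists_isAtomIn_mem_of_mem ht (mem_cons_self x _)
  obtain ⟨P, rfl⟩ := exists_cons_of_mem hxP
  rw [cons_add, cons_inj_right] at hPR
  by_cases hyR : y ∈ R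
  · obtain ⟨Q, R', -, hyQ, rfl, s', hs', rfl⟩ := exists_isAtomIn_mem_of_mem hs hyR
    obtain ⟨Q, rfl⟩ := exists_cons_of_mem hyQ
    rw [cons_add, add_cons, cons_inj_right] at hPR
    have hR' : R' = 0 := hW.eq_zero_of_le_of_cons (by rw [hPR]; exact le_add_self.trans le_add_self)
      (sum_eq_zero_of_mem_lengthsIn hs')
    rw [hR'] at hs'
    have := eq_zero_of_mem_lengthsIn_zero hs'
    omega
  · have hR : R = 0 := hW.eq_zero_of_le_of_cons
      ((le_cons_of_notMem hyR).mp (by rw [hPR]; exact le_add_self))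
      (sum_eq_zero_of_mem_lengthsIn hs)
    rw [hR] at hs
    have := eq_zero_of_mem_lengthsIn_zero hs
    omega

theorem mem_lengthsIn_expand {x y : G} {C : Multiset G} {t : ℕ}
    (ht : t ∈ lengthsIn (ZS G) ((x + y) ::ₘ C)) :
    t ∈ lengthsIn (ZS G) (x ::ₘ y ::ₘ C) ∨ t + 1 ∈ lengthsIn (ZS G) (x ::ₘ y ::ₘ C) := by
  obtain ⟨W, R, hW, hxyW, hC, s, hs, rfl⟩ := exists_isAtomIn_mem_of_mem ht (mem_cons_self _ _)
  obtain ⟨S, rfl⟩ := exists_cons_of_mem hxyW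
  rw [cons_add, cons_inj_right] at hC
  obtain ⟨p, hp⟩ := lengthsIn_nonempty (A := x ::ₘ y ::ₘ S) (by simpa [add_assoc] using hW.1)
  have hp1 := pos_of_mem_lengthsIn cons_ne_zero hp
  have hp2 := hW.le_two_of_mem_lengthsIn_expand hp
  have hA : x ::ₘ y ::ₘ S + R = x ::ₘ y ::ₘ C := by rw [hC, cons_add, cons_add]
  have := hA ▸ add_mem_lengthsIn hp hs
  interval_cases p
  · left; rwa [add_comm] at this
  · right; rwa [add_comm] at this

theorem IsAtomIn.succ_mem_lengthsIn_contract {x y : G} {u R : Multiset G}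
    (hu : IsAtomIn (ZS G) (x ::ₘ y ::ₘ u)) {s : ℕ} (hs : s ∈ lengthsIn (ZS G) R) :
    s + 1 ∈ lengthsIn (ZS G) ((x + y) ::ₘ (u + R)) := by
  simpa [add_comm 1, cons_add] using add_mem_lengthsIn hu.contract.one_mem_lengthsIn hs

theorem exists_mem_lengthsIn_contract {x y : G} {C : Multiset G} {t : ℕ}
    (ht : t ∈ lengthsIn (ZS G) (x ::ₘ y ::ₘ C)) :
    ∃ m ∈ lengthsIn (ZS G) ((x + y) ::ₘ C), t ≤ m + 1 := by
  obtain ⟨V, R, hV, hxV, hA, s, hs, rfl⟩ := exists_isAtomIn_mem_of_mem ht (mem_cons_self x _)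
  obtain ⟨V, rfl⟩ := exists_cons_of_mem hxV
  rw [cons_add, cons_inj_right] at hA
  by_cases hyV : y ∈ V
  · obtain ⟨V, rfl⟩ := exists_cons_of_mem hyV
    rw [cons_add, cons_inj_right] at hA
    exact ⟨s + 1, hA ▸ hV.succ_mem_lengthsIn_contract hs, by omega⟩
  -- `x` and `y` lie in distinct atoms `x V` and `y W`: refactor `(x + y) V W` instead
  have hyR : y ∈ R := (mem_add.mp (hA ▸ mem_cons_self y C)).resolve_left hyV
  obtain ⟨W, R', hW, hyW, rfl, s', hs', rfl⟩ := exists_isAtomIn_mem_of_mem hs hyR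
  obtain ⟨W, rfl⟩ := exists_cons_of_mem hyW
  rw [cons_add, add_cons, cons_inj_right, ← add_assoc] at hA
  have hsum : ((x + y) ::ₘ (V + W)).sum = 0 := by
    have hx := hV.1
    have hy := hW.1
    simp only [mem_ZS, sum_cons, sum_add] at hx hy ⊢
    rw [add_add_add_comm, hx, hy, add_zero]
  obtain ⟨p, hp⟩ := lengthsIn_nonempty hsum
  have hp1 := pos_of_mem_lengthsIn cons_ne_zero hp
  refine ⟨p + s', ?_, by omega⟩
  rw [hA, ← cons_add]
  exact add_mem_lengthsIn hp hs'

theorem mem_DeltaIn_ZS_iff {d : ℕ} :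
    d ∈ DeltaIn (ZS G) ↔ ∃ (A : Multiset G) (k : ℕ), IsGap (lengthsIn (ZS G) A) k (k + d) := by
  simp only [DeltaIn, Set.mem_iUnion, mem_distances_iff_exists_isGap, exists_prop]
  constructor
  · rintro ⟨A, -, h⟩
    exact ⟨A, h⟩
  · rintro ⟨A, k, h⟩
    exact ⟨A, sum_eq_zero_of_mem_lengthsIn h.1, k, h⟩

namespace IsGap

theorem two_le {A : Multiset G} {k l : ℕ} (h : IsGap (lengthsIn (ZS G) A) k l) : 2 ≤ k := by
  obtain ⟨hk, hl, hkl, -⟩ := h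
  by_cases hA : A = 0
  · subst hA
    have := eq_zero_of_mem_lengthsIn_zero hl
    omega
  have := pos_of_mem_lengthsIn hA hk
  by_contra! h1
  obtain rfl : k = 1 := by omega
  have := (isAtomIn_of_one_mem_lengthsIn hk).eq_one_of_mem_lengthsIn hl
  omega

theorem succ_le_or_le_succ {u B : Multiset G} {k l m : ℕ}
    (h : IsGap (lengthsIn (ZS G) (u + B)) k l) (hu : IsAtomIn (ZS G) u)
    (hm : m ∈ lengthsIn (ZS G) B) : m + 1 ≤ k ∨ l ≤ m + 1 := by
  have := h.2.2.2 _ (add_mem_lengthsIn hu.one_mem_lengthsIn hm)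
  omega

theorem exists_card_lt {A : Multiset G} {k l : ℕ} (h : IsGap (lengthsIn (ZS G) A) k l)
    (hkl : k + 2 ≤ l) :
    ∃ B : Multiset G, card B < card A ∧ ∃ l', IsGap (lengthsIn (ZS G) B) k l' ∧ l ≤ l' + 1 := by
  obtain ⟨hk, hl, -, hmid⟩ := h
  obtain ⟨x, y, u, R, hu, rfl, s, hs, rfl⟩ := exists_isAtomIn_cons_cons_of_lt hk hl (by omega)
  rw [cons_add, cons_add] at hl hmid
  obtain ⟨m, hm, hlm⟩ := exists_mem_lengthsIn_contract hl
  obtain ⟨l', hgap, -⟩ := exists_isGap_le (hu.succ_mem_lengthsIn_contract hs) hm (by omega)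
  refine ⟨_, by simp, l', hgap, ?_⟩
  have := hgap.2.2.1
  rcases mem_lengthsIn_expand hgap.2.1 with h | h <;> rcases hmid _ h with h | h <;> omega

theorem mem_DeltaIn {A : Multiset G} {k l d : ℕ} (h : IsGap (lengthsIn (ZS G) A) k l)
    (hd : 1 ≤ d) (hdl : k + d ≤ l) : d ∈ DeltaIn (ZS G) := by
  induction hn : card A using Nat.strong_induction_on generalizing A l with
  | _ n ih =>
  obtain rfl | hlt := hdl.eq_or_lt
  · exact mem_DeltaIn_ZS_iff.mpr ⟨A, k, h⟩
  obtain ⟨B, hB, l', h', hl'⟩ := h.exists_card_lt (by omega)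
  exact ih _ (hn ▸ hB) h' (by omega) rfl

theorem exists_wider_of_add_add {u v C : Multiset G} {k l : ℕ}
    (h : IsGap (lengthsIn (ZS G) (u + v + C)) (k + 1) (l + 1)) (hu : IsAtomIn (ZS G) u)
    (hv : IsAtomIn (ZS G) v) (hk : k ∈ lengthsIn (ZS G) (v + C))
    (hl : l ∈ lengthsIn (ZS G) (u + C)) :
    ∃ (B : Multiset G) (k' l' : ℕ),
      k' ≤ k ∧ l - k ≤ l' - k' ∧ IsGap (lengthsIn (ZS G) B) k' l' := by
  have hkl := h.2.2.1
  have hU : ∀ m ∈ lengthsIn (ZS G) (u + C), m ≤ k ∨ l ≤ m := fun m hm => by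
    have h' : IsGap (lengthsIn (ZS G) (v + (u + C))) (k + 1) (l + 1) := by
      rwa [add_left_comm, ← add_assoc]
    have := h'.succ_le_or_le_succ hv hm
    omega
  have hV : ∀ m ∈ lengthsIn (ZS G) (v + C), m ≤ k ∨ l ≤ m := fun m hm => by
    have h' : IsGap (lengthsIn (ZS G) (u + (v + C))) (k + 1) (l + 1) := by rwa [← add_assoc]
    have := h'.succ_le_or_le_succ hu hm
    omega
  obtain ⟨c, hc⟩ := lengthsIn_nonempty (A := C) (by
    simpa [mem_ZS.mp hv.1] using sum_eq_zero_of_mem_lengthsIn hk)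
  have huc := add_mem_lengthsIn hu.one_mem_lengthsIn hc
  rcases hU _ huc with hck | hlc
  · obtain ⟨t, ht, hct⟩ := exists_isGap_ge huc hl (by omega)
    have := ht.2.2.1
    have := hU t ht.1
    exact ⟨u + C, t, l, by omega, by omega, ht⟩
  · obtain ⟨t, ht, htc⟩ := exists_isGap_le hk (add_mem_lengthsIn hv.one_mem_lengthsIn hc) (by omega)
    have := ht.2.2.1
    have := hV t ht.2.1
    exact ⟨v + C, k, t, le_rfl, by omega, ht⟩

theorem sub_add_two_le_davenport [Fintype G] {A : Multiset G} {k l : ℕ}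
    (h : IsGap (lengthsIn (ZS G) A) k l) : l - k + 2 ≤ davenport G := by
  induction k using Nat.strong_induction_on generalizing A l with
  | _ k ih =>
  have hk2 := h.two_le
  have hkl := h.2.2.1
  obtain ⟨lu, hlu_len, hlu, hA⟩ := h.1
  obtain ⟨lv, hlv_len, hlv, hA'⟩ := h.2.1
  obtain ⟨u, hu⟩ := List.exists_mem_of_length_pos (by omega : 0 < lu.length)
  by_cases hv : ∃ v ∈ lv, u + v ≤ A
  · obtain ⟨v, hv, huv⟩ := hv
    obtain ⟨C, rfl⟩ := Multiset.le_iff_exists_add.mp huv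
    obtain ⟨Ru, hRu, k', hk', hk'k⟩ := exists_add_of_mem_factorization hlu hu
    obtain ⟨Rv, hRv, l', hl', hl'l⟩ := exists_add_of_mem_factorization hlv hv
    rw [hA, add_assoc] at hRu
    rw [hA', add_right_comm, add_comm _ v] at hRv
    obtain rfl := (add_left_cancel hRu).symm
    obtain rfl := (add_left_cancel hRv).symm
    rw [← hlu_len, ← hlv_len, hk'k, hl'l] at h
    obtain ⟨B, k'', l'', hk'', hl'', hgap⟩ :=
      exists_wider_of_add_add h (hlu u hu) (hlv v hv) hk' hl'
    have := ih k'' (by omega) hgap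
    omega
  · push Not at hv
    have hsum : (lv : Multiset (Multiset G)).sum = A := by rw [sum_coe, hA']
    have hlen : card (lv : Multiset (Multiset G)) ≤ card u :=
      card_le_of_forall_not_add_le (by rw [hsum, ← hA]; exact List.le_sum_of_mem hu)
        fun v hv' => by rw [hsum]; exact hv v (mem_coe.mp hv')
    have := (hlu u hu).card_le_davenport
    rw [coe_card] at hlen
    omega

end IsGap

theorem isAtomIn_pair {g : G} (hg : g ≠ 0) : IsAtomIn (ZS G) (g ::ₘ {-g}) :=
  isAtomIn_of_card_le_three (by simp) cons_ne_zero (by simp) (by simp [hg, eq_comm])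

theorem one_mem_DeltaIn_of_ne_zero {a b : G} (ha : a ≠ 0) (hb : b ≠ 0) (hab : a + b ≠ 0) :
    1 ∈ DeltaIn (ZS G) := by
  have htriple : ∀ {x y : G}, x ≠ 0 → y ≠ 0 → x + y ≠ 0 →
      IsAtomIn (ZS G) (x ::ₘ y ::ₘ {-(x + y)}) := fun hx hy hxy =>
    isAtomIn_of_card_le_three (by simp) cons_ne_zero (by simp)
      (by simp only [mem_cons, mem_singleton, zero_eq_neg, not_or]; exact ⟨hx.symm, hy.symm, hxy⟩)
  have hneg : -a + -b ≠ 0 := by rwa [← neg_add, neg_ne_zero]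
  have h2 := add_mem_lengthsIn (htriple ha hb hab).one_mem_lengthsIn
    (htriple (neg_ne_zero.mpr ha) (neg_ne_zero.mpr hb) hneg).one_mem_lengthsIn
  have h3 := add_mem_lengthsIn (add_mem_lengthsIn (isAtomIn_pair ha).one_mem_lengthsIn
    (isAtomIn_pair hb).one_mem_lengthsIn) (isAtomIn_pair hab).one_mem_lengthsIn
  have hB : a ::ₘ b ::ₘ {-(a + b)} + -a ::ₘ -b ::ₘ {-(-a + -b)} =
      a ::ₘ {-a} + b ::ₘ {-b} + (a + b) ::ₘ {-(a + b)} := by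
    ext g
    simp only [count_add, count_cons, count_singleton, neg_add, neg_neg]
    ring
  rw [hB] at h2
  exact mem_DeltaIn_ZS_iff.mpr ⟨_, 2, h2, h3, by omega, by omega⟩

theorem exists_ne_zero_add_ne_zero [Fintype G] (hG : 3 ≤ Fintype.card G) :
    ∃ a b : G, a ≠ 0 ∧ b ≠ 0 ∧ a + b ≠ 0 := by
  have : Nontrivial G := Fintype.one_lt_card_iff_nontrivial.mp (by omega)
  obtain ⟨a, ha⟩ := exists_ne (0 : G)
  obtain ⟨b, -, hb⟩ := Finset.exists_mem_notMem_of_card_lt_card (s := {0, -a})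
    (t := Finset.univ) (Finset.card_le_two.trans_lt (by rw [Finset.card_univ]; omega))
  simp only [Finset.mem_insert, Finset.mem_singleton, not_or] at hb
  exact ⟨a, b, ha, hb.1, fun h => hb.2 (neg_eq_of_add_eq_zero_right h).symm⟩

end ZeroSum

theorem stmt18 {G : Type*} [AddCommGroup G] [Fintype G] (hG : 3 ≤ Fintype.card G) :
    1 ∈ DeltaIn (ZS G) ∧
    (∀ d ∈ DeltaIn (ZS G), d + 2 ≤ davenport G) ∧
    ∀ d₁ d₂ d : ℕ, d₁ ∈ DeltaIn (ZS G) → d₂ ∈ DeltaIn (ZS G) → d₁ ≤ d → d ≤ d₂ →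
      d ∈ DeltaIn (ZS G) := by
  obtain ⟨a, b, ha, hb, hab⟩ := exists_ne_zero_add_ne_zero hG
  refine ⟨one_mem_DeltaIn_of_ne_zero ha hb hab, fun d hd => ?_, fun d₁ d₂ d h₁ h₂ hd₁ hd₂ => ?_⟩
  · obtain ⟨_, k, h⟩ := mem_DeltaIn_ZS_iff.mp hd
    simpa using h.sub_add_two_le_davenport
  · obtain ⟨_, k₁, h₁⟩ := mem_DeltaIn_ZS_iff.mp h₁
    obtain ⟨_, k₂, h₂⟩ := mem_DeltaIn_ZS_iff.mp h₂
    exact h₂.mem_DeltaIn (by have := h₁.2.2.1; omega) (by omega)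
end

section
/- Let C₃ denote the cyclic group of order 3 and C₂ ⊕ C₂ the Klein four-group. Then the systems of sets of lengths satisfy L(B(C₃)) = L(B(C₂ ⊕ C₂)) = { y + 2k + [0, k] : y, k ∈ ℕ₀ }, where y + 2k + [0, k] denotes the integer interval { y + 2k, y + 2k + 1, …, y + 3k }. -/
open scoped Classical ENNReal

/-!
The atoms of `B(C₃)` are `0`, `1·2`, `1³`, `2³`, and those of `B(C₂ ⊕ C₂)` are `0`, `e₁²`, `e₂²`,
`e₃²`, `e₁e₂e₃` with `e₃ = e₁ + e₂`. A factorization of a zero-sum sequence is thus a solution in ℕ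
of a linear system in the multiplicities of the group elements. The number of factors `1·2`
(resp. `e₁e₂e₃`) runs through an arithmetic progression of step 3 (resp. 2) bounded by the
smallest multiplicity of a nonzero element, and each step changes the length by one; so every set of lengths is an
interval `[m, m + K]` with `2K ≤ m`, that is `y + 2k + [0, k]`. Conversely, `0ʸ (1·2)³ᵏ` and
`0ʸ (e₁e₂e₃)²ᵏ` have exactly this set of lengths.
-/

theorem List.sum_count_nsmul {ι M : Type*} [Fintype ι] [DecidableEq ι] [AddCommMonoid M]
    (l : List ι) (g : ι → M) : ∑ i, l.count i • g i = (l.map g).sum := by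
  induction l with
  | nil => simp
  | cons a l ih => simp [List.count_cons, add_smul, Finset.sum_add_distrib, ih, add_comm]

theorem List.sum_count_eq_length {ι : Type*} [Fintype ι] [DecidableEq ι] (l : List ι) :
    ∑ i, l.count i = l.length := by
  induction l with
  | nil => simp
  | cons a l ih => simp [List.count_cons, Finset.sum_add_distrib, ih]

theorem lengthsIn_eq_of_isAtomIn_iff {ι N : Type*} [Fintype ι] [AddCommMonoid N] {S : Set N}
    (f : ι → N) (hf : ∀ u, IsAtomIn S u ↔ u ∈ Set.range f) (a : N) :
    lengthsIn S a = {k | ∃ c : ι → ℕ, ∑ i, c i = k ∧ ∑ i, c i • f i = a} := by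
  ext k
  constructor
  · rintro ⟨l, rfl, hl, rfl⟩
    obtain ⟨l, rfl⟩ : l ∈ Set.range (List.map f) := by
      rw [Set.range_list_map]
      exact fun x hx => (hf x).1 (hl x hx)
    exact ⟨fun i => l.count i, by simp [l.sum_count_eq_length], l.sum_count_nsmul f⟩
  · rintro ⟨c, rfl, rfl⟩
    set l := (Finsupp.equivFunOnFinite.symm c).toMultiset.toList
    have hl : ∀ i, l.count i = c i := fun i => by
      rw [← Multiset.coe_count, Multiset.coe_toList, Finsupp.count_toMultiset]
      rfl
    refine ⟨l.map f, ?_, ?_, ?_⟩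
    · simp [← l.sum_count_eq_length, hl]
    · intro _ hx
      obtain ⟨i, -, rfl⟩ := List.mem_map.1 hx
      exact (hf _).2 ⟨i, rfl⟩
    · simp only [← l.sum_count_nsmul, hl]

theorem setOf_lengthsIn_eq_setOf_Icc {N : Type*} [AddCommMonoid N] (S : Set N) (lo hi : N → ℕ)
    (hL : ∀ s ∈ S, lengthsIn S s = Set.Icc (lo s) (hi s))
    (hbounds : ∀ s ∈ S, lo s ≤ hi s ∧ 2 * (hi s - lo s) ≤ lo s)
    (hrealize : ∀ y k, ∃ s ∈ S, lo s = y + 2 * k ∧ hi s = y + 3 * k) :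
    {L : Set ℕ | ∃ s ∈ S, L = lengthsIn S s} =
      {L : Set ℕ | ∃ y k : ℕ, L = Set.Icc (y + 2 * k) (y + 3 * k)} := by
  ext L
  constructor
  · rintro ⟨s, hs, rfl⟩
    obtain ⟨hle, htwice⟩ := hbounds s hs
    refine ⟨lo s - 2 * (hi s - lo s), hi s - lo s, ?_⟩
    rw [hL s hs]
    congr 1 <;> omega
  · rintro ⟨y, k, rfl⟩
    obtain ⟨s, hs, hlo, hhi⟩ := hrealize y k
    exact ⟨s, hs, by rw [hL s hs, hlo, hhi]⟩

section ZeroSum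

variable {G : Type*} [AddCommGroup G]

theorem isAtomIn_ZS_singleton_zero : IsAtomIn (ZS G) {0} := by
  refine ⟨by simp [ZS], Multiset.singleton_ne_zero 0, fun v _ w _ h => ?_⟩
  have hcard := congrArg Multiset.card h
  simp only [Multiset.card_singleton, Multiset.card_add] at hcard
  simp only [← Multiset.card_eq_zero]
  omega

theorem isAtomIn_ZS_of_card_le_three {u : Multiset G} (hu : u ∈ ZS G) (hu0 : u ≠ 0)
    (hcard : Multiset.card u ≤ 3) (h0 : (0 : G) ∉ u) : IsAtomIn (ZS G) u := by
  refine ⟨hu, hu0, fun v hv w hw huvw => ?_⟩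
  -- one of two nonempty parts has size one, and a zero-sum part of size one is `{0}`
  have hsingle : ∀ t ∈ ZS G, t ≤ u → Multiset.card t ≠ 1 := by
    rintro t ht htu h1
    obtain ⟨g, rfl⟩ := Multiset.card_eq_one.1 h1
    obtain rfl : g = 0 := by simpa [ZS] using ht
    exact h0 (Multiset.singleton_le.1 htu)
  have hv1 := hsingle v hv (huvw ▸ Multiset.le_add_right v w)
  have hw1 := hsingle w hw (huvw ▸ Multiset.le_add_left w v)
  have hvw : Multiset.card v + Multiset.card w ≤ 3 := by
    rwa [← Multiset.card_add, ← huvw]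
  simp only [← Multiset.card_eq_zero]
  omega

theorem eq_of_isAtomIn_ZS_of_le {u v : Multiset G} (hu : IsAtomIn (ZS G) u) (hvu : v ≤ u)
    (hv : v ∈ ZS G) (hv0 : v ≠ 0) : u = v := by
  obtain ⟨w, rfl⟩ := Multiset.le_iff_exists_add.1 hvu
  have hw : w ∈ ZS G := by simpa [ZS, show v.sum = 0 from hv] using hu.1
  rcases hu.2.2 v hv w hw rfl with h | rfl
  · exact absurd h hv0
  · exact add_zero v

theorem isAtomIn_ZS_iff_mem_range {ι : Type*} (T : ι → Multiset G)
    (hT : ∀ i, IsAtomIn (ZS G) (T i)) (hcover : ∀ u ∈ ZS G, u ≠ 0 → ∃ i, T i ≤ u)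
    (u : Multiset G) : IsAtomIn (ZS G) u ↔ u ∈ Set.range T := by
  refine ⟨fun hu => ?_, fun ⟨i, hi⟩ => hi ▸ hT i⟩
  obtain ⟨i, hi⟩ := hcover u hu.1 hu.2.1
  exact ⟨i, (eq_of_isAtomIn_ZS_of_le hu hi (hT i).1 (hT i).2.1).symm⟩

end ZeroSum

theorem ZMod.forall_three {P : ZMod 3 → Prop} : (∀ a, P a) ↔ P 0 ∧ P 1 ∧ P 2 :=
  ⟨fun h => ⟨h 0, h 1, h 2⟩, fun ⟨h0, h1, h2⟩ a => by fin_cases a <;> assumption⟩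

theorem three_dvd_of_mem_ZS_zmod3 {s : Multiset (ZMod 3)} (hs : s ∈ ZS (ZMod 3)) :
    3 ∣ s.count 1 + 2 * s.count 2 := by
  have hsum : s.sum = ((s.count 1 + 2 * s.count 2 : ℕ) : ZMod 3) := by
    rw [Finset.sum_multiset_count_of_subset s Finset.univ (Finset.subset_univ _),
      show (Finset.univ : Finset (ZMod 3)) = {0, 1, 2} by decide]
    simp +decide [Finset.sum_insert, mul_comm]
  rw [← ZMod.natCast_eq_zero_iff, ← hsum]
  exact hs

def atomsZMod3 : Fin 4 → Multiset (ZMod 3) := ![{0}, {1, 2}, {1, 1, 1}, {2, 2, 2}]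

theorem isAtomIn_ZS_zmod3_iff (u : Multiset (ZMod 3)) :
    IsAtomIn (ZS (ZMod 3)) u ↔ u ∈ Set.range atomsZMod3 := by
  refine isAtomIn_ZS_iff_mem_range _ (fun i => ?_) (fun u hu hu0 => ?_) u
  · fin_cases i
    · exact isAtomIn_ZS_singleton_zero
    all_goals refine isAtomIn_ZS_of_card_le_three ?_ ?_ ?_ ?_ <;> simp +decide [ZS, atomsZMod3]
  · have hdvd := three_dvd_of_mem_ZS_zmod3 hu
    have hne : u.count 0 + u.count 1 + u.count 2 ≠ 0 := by
      contrapose! hu0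
      ext a
      revert a
      simp only [ZMod.forall_three, Multiset.count_zero]
      omega
    -- with no `0` and not both `1` and `2`, divisibility by 3 forces `1³` or `2³`
    simp +decide only [Fin.exists_fin_succ, IsEmpty.exists_iff, or_false, Multiset.le_iff_count,
      ZMod.forall_three, atomsZMod3, Matrix.cons_val_zero, Matrix.cons_val_succ,
      Matrix.cons_val_fin_one, Multiset.insert_eq_cons, Multiset.count_cons,
      Multiset.count_singleton, ↓reduceIte]
    omega

theorem sum_nsmul_atomsZMod3_eq_iff (c : Fin 4 → ℕ) (s : Multiset (ZMod 3)) :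
    ∑ i, c i • atomsZMod3 i = s ↔
      c 0 = s.count 0 ∧ c 1 + 3 * c 2 = s.count 1 ∧ c 1 + 3 * c 3 = s.count 2 := by
  simp +decide only [Multiset.ext, ZMod.forall_three, Fin.sum_univ_four, atomsZMod3,
    Matrix.cons_val_zero, Matrix.cons_val_one, Matrix.cons_val, Multiset.insert_eq_cons,
    Multiset.count_add, Multiset.count_nsmul, Multiset.count_cons, Multiset.count_singleton,
    ↓reduceIte]
  omega

theorem lengthsIn_ZS_zmod3 {s : Multiset (ZMod 3)} (hs : s ∈ ZS (ZMod 3)) :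
    lengthsIn (ZS (ZMod 3)) s =
      Set.Icc (s.count 0 + (s.count 1 + s.count 2 + s.count 1 % 3) / 3)
        (s.count 0 + (s.count 1 + s.count 2 + min (s.count 1) (s.count 2)) / 3) := by
  have hdvd := three_dvd_of_mem_ZS_zmod3 hs
  rw [lengthsIn_eq_of_isAtomIn_iff atomsZMod3 isAtomIn_ZS_zmod3_iff]
  ext k
  simp only [Set.mem_ofPred_eq, sum_nsmul_atomsZMod3_eq_iff]
  simp only [Fin.sum_univ_four, Set.mem_Icc]
  set x := s.count 0
  set y := s.count 1
  set z := s.count 2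
  constructor
  · rintro ⟨c, rfl, h0, h1, h2⟩
    omega
  · intro hk
    refine ⟨![x, 3 * (k - x) - (y + z), (2 * y + z) / 3 - (k - x), (y + 2 * z) / 3 - (k - x)],
      ?_, ?_, ?_, ?_⟩ <;> simp <;> omega

theorem setOf_lengthsIn_ZS_zmod3 :
    {L : Set ℕ | ∃ s ∈ ZS (ZMod 3), L = lengthsIn (ZS (ZMod 3)) s} =
      {L : Set ℕ | ∃ y k : ℕ, L = Set.Icc (y + 2 * k) (y + 3 * k)} := by
  refine setOf_lengthsIn_eq_setOf_Icc _ _ _ (fun s hs => lengthsIn_ZS_zmod3 hs)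
    (fun s hs => ?_) (fun y k => ⟨y • {0} + (3 * k) • {1, 2}, ?_, ?_⟩)
  · have := three_dvd_of_mem_ZS_zmod3 hs
    omega
  · have h3 : (3 : ZMod 3) = 0 := rfl
    simp [ZS, Multiset.sum_nsmul, h3]
  · simp +decide only [Multiset.insert_eq_cons, Multiset.count_add, Multiset.count_nsmul,
      Multiset.count_cons, Multiset.count_singleton, ↓reduceIte]
    omega

theorem ZMod.forall_two_prod_two {P : ZMod 2 × ZMod 2 → Prop} :
    (∀ a, P a) ↔ P 0 ∧ P (1, 0) ∧ P (0, 1) ∧ P (1, 1) :=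
  ⟨fun h => ⟨h 0, h (1, 0), h (0, 1), h (1, 1)⟩, fun ⟨h0, h1, h2, h3⟩ ⟨a, b⟩ => by
    fin_cases a <;> fin_cases b <;> assumption⟩

theorem two_dvd_of_mem_ZS_klein {s : Multiset (ZMod 2 × ZMod 2)}
    (hs : s ∈ ZS (ZMod 2 × ZMod 2)) :
    2 ∣ s.count (1, 0) + s.count (1, 1) ∧ 2 ∣ s.count (0, 1) + s.count (1, 1) := by
  have hsum : s.sum = (((s.count (1, 0) + s.count (1, 1) : ℕ) : ZMod 2),
      ((s.count (0, 1) + s.count (1, 1) : ℕ) : ZMod 2)) := by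
    rw [Finset.sum_multiset_count_of_subset s Finset.univ (Finset.subset_univ _),
      show (Finset.univ : Finset (ZMod 2 × ZMod 2)) = {0, (1, 0), (0, 1), (1, 1)} by decide]
    ext <;> simp +decide [Finset.sum_insert]
  rw [← ZMod.natCast_eq_zero_iff, ← ZMod.natCast_eq_zero_iff, ← Prod.mk_eq_zero, ← hsum]
  exact hs

def atomsKlein : Fin 5 → Multiset (ZMod 2 × ZMod 2) :=
  ![{0}, {(1, 0), (1, 0)}, {(0, 1), (0, 1)}, {(1, 1), (1, 1)}, {(1, 0), (0, 1), (1, 1)}]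

theorem isAtomIn_ZS_klein_iff (u : Multiset (ZMod 2 × ZMod 2)) :
    IsAtomIn (ZS (ZMod 2 × ZMod 2)) u ↔ u ∈ Set.range atomsKlein := by
  refine isAtomIn_ZS_iff_mem_range _ (fun i => ?_) (fun u hu hu0 => ?_) u
  · fin_cases i
    · exact isAtomIn_ZS_singleton_zero
    all_goals refine isAtomIn_ZS_of_card_le_three ?_ ?_ ?_ ?_ <;> simp +decide [ZS, atomsKlein]
  · have hdvd := two_dvd_of_mem_ZS_klein hu
    have hne : u.count 0 + u.count (1, 0) + u.count (0, 1) + u.count (1, 1) ≠ 0 := by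
      contrapose! hu0
      ext a
      revert a
      simp only [ZMod.forall_two_prod_two, Multiset.count_zero]
      omega
    -- if no nonzero element occurs twice, the parities force `e₁e₂e₃`
    simp +decide only [Fin.exists_fin_succ, IsEmpty.exists_iff, or_false, Multiset.le_iff_count,
      ZMod.forall_two_prod_two, atomsKlein, Matrix.cons_val_zero, Matrix.cons_val_succ,
      Matrix.cons_val_fin_one, Multiset.insert_eq_cons, Multiset.count_cons,
      Multiset.count_singleton, ↓reduceIte]
    omega

theorem sum_nsmul_atomsKlein_eq_iff (c : Fin 5 → ℕ) (s : Multiset (ZMod 2 × ZMod 2)) :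
    ∑ i, c i • atomsKlein i = s ↔
      c 0 = s.count 0 ∧ 2 * c 1 + c 4 = s.count (1, 0) ∧ 2 * c 2 + c 4 = s.count (0, 1) ∧
        2 * c 3 + c 4 = s.count (1, 1) := by
  simp +decide only [Multiset.ext, ZMod.forall_two_prod_two, Fin.sum_univ_five, atomsKlein,
    Matrix.cons_val_zero, Matrix.cons_val_one, Matrix.cons_val, Multiset.insert_eq_cons,
    Multiset.count_add, Multiset.count_nsmul, Multiset.count_cons, Multiset.count_singleton,
    ↓reduceIte]
  omega

theorem lengthsIn_ZS_klein {s : Multiset (ZMod 2 × ZMod 2)} (hs : s ∈ ZS (ZMod 2 × ZMod 2)) :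
    lengthsIn (ZS (ZMod 2 × ZMod 2)) s =
      Set.Icc
        (s.count 0 + (s.count (1, 0) + s.count (0, 1) + s.count (1, 1) -
          min (s.count (1, 0)) (min (s.count (0, 1)) (s.count (1, 1)))) / 2)
        (s.count 0 +
          (s.count (1, 0) + s.count (0, 1) + s.count (1, 1) - s.count (1, 0) % 2) / 2) := by
  have hdvd := two_dvd_of_mem_ZS_klein hs
  rw [lengthsIn_eq_of_isAtomIn_iff atomsKlein isAtomIn_ZS_klein_iff]
  ext k
  simp only [Set.mem_ofPred_eq, sum_nsmul_atomsKlein_eq_iff]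
  simp only [Fin.sum_univ_five, Set.mem_Icc]
  set w := s.count 0
  set x := s.count (1, 0)
  set y := s.count (0, 1)
  set z := s.count (1, 1)
  constructor
  · rintro ⟨c, rfl, h0, h1, h2, h3⟩
    omega
  · intro hk
    refine ⟨![w, (k - w) - (y + z) / 2, (k - w) - (x + z) / 2, (k - w) - (x + y) / 2,
      x + y + z - 2 * (k - w)], ?_, ?_, ?_, ?_, ?_⟩ <;> simp <;> omega

theorem setOf_lengthsIn_ZS_klein :
    {L : Set ℕ | ∃ s ∈ ZS (ZMod 2 × ZMod 2), L = lengthsIn (ZS (ZMod 2 × ZMod 2)) s} =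
      {L : Set ℕ | ∃ y k : ℕ, L = Set.Icc (y + 2 * k) (y + 3 * k)} := by
  refine setOf_lengthsIn_eq_setOf_Icc _ _ _ (fun s hs => lengthsIn_ZS_klein hs)
    (fun s hs => ?_) (fun y k => ⟨y • {0} + (2 * k) • {(1, 0), (0, 1), (1, 1)}, ?_, ?_⟩)
  · have := two_dvd_of_mem_ZS_klein hs
    omega
  · have h2 : (2 : ZMod 2) = 0 := rfl
    simp [ZS, Multiset.sum_nsmul, h2]
  · simp +decide only [Multiset.insert_eq_cons, Multiset.count_add, Multiset.count_nsmul,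
      Multiset.count_cons, Multiset.count_singleton, ↓reduceIte]
    omega

theorem stmt19 :
    {L : Set ℕ | ∃ s ∈ ZS (ZMod 3), L = lengthsIn (ZS (ZMod 3)) s} =
      {L : Set ℕ | ∃ s ∈ ZS (ZMod 2 × ZMod 2), L = lengthsIn (ZS (ZMod 2 × ZMod 2)) s} ∧
    {L : Set ℕ | ∃ s ∈ ZS (ZMod 3), L = lengthsIn (ZS (ZMod 3)) s} =
      {L : Set ℕ | ∃ y k : ℕ, L = Set.Icc (y + 2 * k) (y + 3 * k)} :=
  ⟨setOf_lengthsIn_ZS_zmod3.trans setOf_lengthsIn_ZS_klein.symm, setOf_lengthsIn_ZS_zmod3⟩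
end
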